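/- For positive integer m, reals b_1, b_2 > 0, natural number k, and x ≥ 0: ∫_0^x f_{m,b_2}(t) · e^{-b_1 t}(b_1 t)^k/k! dt = NB_{m,p}(k) · F_{m+k, b_1+b_2}(x), where p = b_2/(b_1+b_2), NB_{m,p}(k) = C(m-1+k, m-1)(1-p)^k p^m, and F_{m+k,b_1+b_2} is the Gamma(m+k, b_1+b_2) CDF. -/

import Mathlib

open MeasureTheory

/-- The Gamma(n, b) density `b^n t^{n-1} e^{-bt}/(n-1)!`. -/
noncomputable def gammaDensity (n : ℕ) (b t : ℝ) : ℝ :=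
  b ^ n * t ^ (n - 1) * Real.exp (-b * t) / ((n - 1).factorial : ℝ)

/-- The negative binomial probability mass function `NB_{m,p}(k)`. -/
noncomputable def negBinom (m : ℕ) (p : ℝ) (k : ℕ) : ℝ :=
  (Nat.choose (m - 1 + k) (m - 1) : ℝ) * (1 - p) ^ k * p ^ m

/-! Multiplying the Gamma(m, b₂) density by the Poisson weight `e^{-b₁t}(b₁t)^k/k!` gives,
pointwise in `t`, a constant multiple of the Gamma(m + k, b₁ + b₂) density; the constant is
`NB_{m,p}(k)` with `p = b₂/(b₁ + b₂)`, so integrating over `[0, x]` yields the identity. -/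

open Nat in
theorem negBinom_div_add {m : ℕ} (hm : 0 < m) {b₁ b₂ : ℝ} (h : b₁ + b₂ ≠ 0) (k : ℕ) :
    negBinom m (b₂ / (b₁ + b₂)) k =
      (m + k - 1)! / ((m - 1)! * k !) * b₁ ^ k * b₂ ^ m / (b₁ + b₂) ^ (m + k) := by
  have hcomp : 1 - b₂ / (b₁ + b₂) = b₁ / (b₁ + b₂) := by field_simp; ring
  rw [negBinom, Nat.cast_add_choose, hcomp, show m - 1 + k = m + k - 1 by omega,
    div_pow, div_pow, pow_add]
  ring

theorem gammaDensity_mul_poisson {m : ℕ} (hm : 0 < m) {b₁ b₂ : ℝ} (h : b₁ + b₂ ≠ 0)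
    (k : ℕ) (t : ℝ) :
    gammaDensity m b₂ t * (Real.exp (-(b₁ * t)) * (b₁ * t) ^ k / (k.factorial : ℝ)) =
      negBinom m (b₂ / (b₁ + b₂)) k * gammaDensity (m + k) (b₁ + b₂) t := by
  have hexp : Real.exp (-b₂ * t) * Real.exp (-(b₁ * t)) = Real.exp (-(b₁ + b₂) * t) := by
    rw [← Real.exp_add]; ring_nf
  have htpow : t ^ (m + k - 1) = t ^ (m - 1) * t ^ k := by
    rw [← pow_add, show m - 1 + k = m + k - 1 by omega]
  rw [negBinom_div_add hm h, gammaDensity, gammaDensity, ← hexp, htpow, mul_pow]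
  field_simp

theorem gamma_poisson_integral_general (m : ℕ) (hm : 0 < m) (b₁ b₂ : ℝ)
    (hb₁ : 0 < b₁) (hb₂ : 0 < b₂) (k : ℕ) (x : ℝ) :
    ∫ t in (0 : ℝ)..x,
        gammaDensity m b₂ t * (Real.exp (-(b₁ * t)) * (b₁ * t) ^ k / (k.factorial : ℝ)) =
      negBinom m (b₂ / (b₁ + b₂)) k * ∫ t in (0 : ℝ)..x, gammaDensity (m + k) (b₁ + b₂) t := by
  have hsum : b₁ + b₂ ≠ 0 := by positivity
  simp_rw [gammaDensity_mul_poisson hm hsum]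
  exact intervalIntegral.integral_const_mul _ _

theorem gamma_poisson_integral (m : ℕ) (hm : 0 < m) (b₁ b₂ : ℝ)
    (hb₁ : 0 < b₁) (hb₂ : 0 < b₂) (k : ℕ) (x : ℝ) (hx : 0 ≤ x) :
    ∫ t in (0 : ℝ)..x,
        gammaDensity m b₂ t * (Real.exp (-(b₁ * t)) * (b₁ * t) ^ k / (k.factorial : ℝ)) =
      negBinom m (b₂ / (b₁ + b₂)) k * ∫ t in (0 : ℝ)..x, gammaDensity (m + k) (b₁ + b₂) t :=
  gamma_poisson_integral_general m hm b₁ b₂ hb₁ hb₂ k x
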